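/- arXiv:1312.3164 — 2 statements merged into one kernel-verified Lean document; each statement's English description precedes it below -/
import Mathlib

section
/- For all integers u ≥ 0, k ≥ 2, n ≥ 3, and m ≥ max{u+2, (k-1)(n-1)+1}, the determinant satisfies the recurrence D(m,n,u,k) = D(m-1,n,u,k) + D(m,n-1,u,k). -/
/-- Binomial coefficient `C(a,b)` for integers, with the convention that it is `0` when `b < 0`. -/
def ichoose (a b : ℤ) : ℤ := if 0 ≤ b then (a.toNat.choose b.toNat : ℤ) else 0

/-- The determinant `D(m,n,u,k)` of the `(n-1)×(n-1)` matrix with `(i,j)` entry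
`C(m - max{u, (k-1)j}, 1 - i + j)` for `i, j = 1, …, n-1`. -/
def D (m n u k : ℤ) : ℤ :=
  Matrix.det (Matrix.of fun i j : Fin (n - 1).toNat =>
    ichoose (m - max u ((k - 1) * ((j : ℤ) + 1))) (1 - ((i : ℤ) + 1) + ((j : ℤ) + 1)))

/-!
Pascal's rule splits every row `i` of the matrix for `m` into row `i` plus row `i + 1` of the
matrix for `m - 1`, where the row below the last one is the unit vector `e_{n-1}`. Subtracting
successive rows is unimodular, so by linearity in the last row the determinant is `D(m-1,n)`
plus the determinant with last row `e_{n-1}`, and expanding along that row leaves the leading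
minor, which is the matrix of `D(m,n-1)`.
-/

namespace Matrix

variable {R : Type*} [CommRing R] {N : ℕ}

theorem det_eq_of_row_eq_add_succ {A B : Matrix (Fin (N + 1)) (Fin (N + 1)) R}
    (hlast : ∀ j, B (Fin.last N) j = A (Fin.last N) j)
    (hsucc : ∀ (i : Fin N) j, B i.castSucc j = A i.castSucc j + A i.succ j) :
    B.det = A.det := by
  rw [← det_submatrix_equiv_self Fin.revPerm B, ← det_submatrix_equiv_self Fin.revPerm A]
  symm
  refine det_eq_of_forall_row_eq_smul_add_pred (fun _ => -1) (fun j => ?_) (fun i j => ?_)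
  · simp [hlast]
  · simp [Fin.rev_succ, Fin.rev_castSucc, hsucc]

theorem det_updateRow_last_single (A : Matrix (Fin (N + 1)) (Fin (N + 1)) R) :
    (A.updateRow (Fin.last N) (Pi.single (Fin.last N) 1)).det =
      (A.submatrix Fin.castSucc Fin.castSucc).det := by
  rw [← adjugate_apply, adjugate_fin_succ_eq_det_submatrix, Fin.succAbove_last,
    Fin.val_last, Even.neg_one_pow ⟨N, rfl⟩, one_mul]

end Matrix

theorem ichoose_of_neg {a b : ℤ} (hb : b < 0) : ichoose a b = 0 :=
  if_neg (by omega)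

@[simp]
theorem ichoose_zero_right (a : ℤ) : ichoose a 0 = 1 := by
  simp [ichoose]

theorem ichoose_pascal {a : ℤ} (b : ℤ) (ha : 1 ≤ a) :
    ichoose a b = ichoose (a - 1) b + ichoose (a - 1) (b - 1) := by
  rcases lt_trichotomy b 0 with hb | rfl | hb
  · simp [ichoose_of_neg hb, ichoose_of_neg (show b - 1 < 0 by omega)]
  · simp [ichoose_of_neg (show (-1 : ℤ) < 0 by omega)]
  · unfold ichoose
    rw [if_pos (by omega), if_pos (by omega), if_pos (by omega),
      show a.toNat = (a - 1).toNat + 1 by omega, show b.toNat = (b - 1).toNat + 1 by omega,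
      Nat.choose_succ_succ]
    push_cast
    ring

/-- Entry `(i, j)` is `C(a j, 1 - i + j)` with rows and columns numbered from `1`, as in `D`. -/
def binomialMatrix (a : ℤ → ℤ) (N : ℕ) : Matrix (Fin N) (Fin N) ℤ :=
  Matrix.of fun i j : Fin N => ichoose (a ((j : ℤ) + 1)) (1 - ((i : ℤ) + 1) + ((j : ℤ) + 1))

theorem det_binomialMatrix_succ {a : ℤ → ℤ} {N : ℕ}
    (ha : ∀ j : Fin (N + 1), 1 ≤ a ((j : ℤ) + 1)) :
    (binomialMatrix a (N + 1)).det =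
      (binomialMatrix (a · - 1) (N + 1)).det + (binomialMatrix a N).det := by
  set A := binomialMatrix (a · - 1) (N + 1)
  set B := binomialMatrix a (N + 1)
  have pascal : ∀ i j : Fin (N + 1), B i j = A i j +
      ichoose (a ((j : ℤ) + 1) - 1) (1 - ((i : ℤ) + 1 + 1) + ((j : ℤ) + 1)) := by
    intro i j
    simp only [A, B, binomialMatrix, Matrix.of_apply]
    rw [ichoose_pascal _ (ha j)]
    ring_nf
  have hsucc : ∀ (i : Fin N) j, B i.castSucc j = A i.castSucc j + A i.succ j :=
    fun i j => pascal i.castSucc j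
  have hlast : B (Fin.last N) = A (Fin.last N) + Pi.single (Fin.last N) 1 := by
    ext j
    rw [pascal, Pi.add_apply, add_right_inj]
    rcases (Fin.le_last j).lt_or_eq with hj | rfl
    · rw [Pi.single_eq_of_ne hj.ne, ichoose_of_neg]
      simp only [Fin.lt_def, Fin.val_last] at hj ⊢
      omega
    · simp
  have hminor : B.submatrix Fin.castSucc Fin.castSucc = binomialMatrix a N := by
    ext i j
    simp [B, binomialMatrix]
  calc B.det = (B.updateRow (Fin.last N) (A (Fin.last N) + Pi.single (Fin.last N) 1)).det := by
        rw [← hlast, Matrix.updateRow_eq_self]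
    _ = A.det + (binomialMatrix a N).det := by
        rw [Matrix.det_updateRow_add, Matrix.det_updateRow_last_single, hminor]
        congr 1
        apply Matrix.det_eq_of_row_eq_add_succ
        · simp
        · intro i j
          rw [Matrix.updateRow_ne (Fin.castSucc_lt_last i).ne]
          exact hsucc i j

theorem D_eq_det_binomialMatrix (m n u k : ℤ) :
    D m n u k = (binomialMatrix (fun x => m - max u ((k - 1) * x)) (n - 1).toNat).det :=
  rfl

theorem det_recurrence_general (m n u k : ℤ) (hk : 2 ≤ k) (hn : 3 ≤ n)
    (hm : max (u + 2) ((k - 1) * (n - 1) + 1) ≤ m) :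
    D m n u k = D (m - 1) n u k + D m (n - 1) u k := by
  obtain ⟨N, hN⟩ : ∃ N : ℕ, n - 1 = N + 1 := ⟨(n - 2).toNat, by omega⟩
  have hpos : ∀ j : Fin (N + 1), 1 ≤ m - max u ((k - 1) * ((j : ℤ) + 1)) := by
    intro j
    have hcol : (k - 1) * ((j : ℤ) + 1) ≤ (k - 1) * (n - 1) :=
      mul_le_mul_of_nonneg_left (by omega) (by omega)
    rw [le_sub_comm, max_le_iff]
    omega
  simp only [D_eq_det_binomialMatrix]
  rw [show (n - 1).toNat = N + 1 by omega, show (n - 1 - 1).toNat = N by omega,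
    det_binomialMatrix_succ hpos]
  simp only [sub_right_comm]

theorem det_recurrence (m n u k : ℤ) (hu : 0 ≤ u) (hk : 2 ≤ k) (hn : 3 ≤ n)
    (hm : max (u + 2) ((k - 1) * (n - 1) + 1) ≤ m) :
    D m n u k = D (m - 1) n u k + D m (n - 1) u k :=
  det_recurrence_general m n u k hk hn hm
end

section
/- For all integers m, n, k with k ≥ 1, n ≥ 1 and m ≥ kn, the determinant D(m+1, n+1, 0, k+1) equals (m+1-kn)/(m+1) · C(m+n, n), where the equality is of rational numbers. -/
/-!
Up to shifting indices, `D (m + 1) (n + 1) 0 (k + 1)` is the leading `n × n` minor of the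
infinite matrix `a i j = C(m + 1 - k (j + 1), j + 1 - i)`, which is upper Hessenberg with ones on
the subdiagonal. Expanding along the last column gives the recurrence
`d (N + 1) = ∑_{i ≤ N} (-1)^(N - i) C(c, N + 1 - i) d i` with `c = m + 1 - k (N + 1)`, and the
claimed values `(m + 1 - k i) / (m + 1) · C(m + i, i)` satisfy it: multiplied by `m + 1`, the
recurrence becomes `∑_{r + s = N + 1} (-1)^r C(c, r) (c + k r) C(m + s, s) = 0`. Writing
`m = c + b` with `b + 1 = k (N + 1)` and splitting the factor `c + k r`, this follows from the
inverse Vandermonde identity `∑_{r + s = n} (-1)^r C(a, r) C(a + b + s, s) = C(b + n, n)`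
together with `r C(a, r) = a C(a - 1, r - 1)` and `n C(b + n, n) = (b + 1) C(b + n, n - 1)`.
-/

open Finset

theorem Matrix.det_eq_det_submatrix_castSucc_of_last_row {R : Type*} [CommRing R] {n : ℕ}
    (M : Matrix (Fin (n + 1)) (Fin (n + 1)) R) (h : M (Fin.last n) = Pi.single (Fin.last n) 1) :
    M.det = (M.submatrix Fin.castSucc Fin.castSucc).det := by
  rw [det_succ_row M (Fin.last n), sum_eq_single (Fin.last n)]
  · simp [h, ← two_mul, pow_mul]
  · intro j _ hj
    simp [h, hj]
  · simp

section Hessenberg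

variable {R : Type*} [CommRing R]

def cornerMatrix (a : ℕ → ℕ → R) (N : ℕ) : Matrix (Fin N) (Fin N) R :=
  Matrix.of fun i j => a i j

variable {a : ℕ → ℕ → R} (hsubdiag : ∀ j, a (j + 1) j = 1)
  (hbelow : ∀ i j, j + 1 < i → a i j = 0)
include hsubdiag hbelow

theorem det_cornerMatrix_submatrix_succAbove_castSucc (N : ℕ) (i : Fin (N + 1)) :
    ((cornerMatrix a (N + 1)).submatrix i.succAbove Fin.castSucc).det =
      (cornerMatrix a i).det := by
  induction N with
  | zero => rw [Fin.fin_one_eq_zero i]; rfl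
  | succ N ih =>
    induction i using Fin.lastCases with
    | last => rw [Fin.succAbove_last]; rfl
    | cast i =>
      rw [Matrix.det_eq_det_submatrix_castSucc_of_last_row, Matrix.submatrix_submatrix]
      · rw [Fin.val_castSucc, ← ih i]
        congr 1
        ext s t
        simp [cornerMatrix]
      · ext t
        induction t using Fin.lastCases with
        | last => simp [cornerMatrix, Fin.succAbove_of_le_castSucc, Fin.le_last, hsubdiag]
        | cast t =>
          simpa [cornerMatrix, Fin.succAbove_of_le_castSucc, Fin.le_last]
            using hbelow _ _ (by omega)

theorem det_cornerMatrix_succ (N : ℕ) :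
    (cornerMatrix a (N + 1)).det =
      ∑ i ∈ range (N + 1), (-1) ^ (i + N) * a i N * (cornerMatrix a i).det := by
  rw [Matrix.det_succ_column _ (Fin.last N), ← Fin.sum_univ_eq_sum_range]
  refine sum_congr rfl fun i _ => ?_
  rw [Fin.succAbove_last, det_cornerMatrix_submatrix_succAbove_castSucc hsubdiag hbelow]
  simp [cornerMatrix]

end Hessenberg

theorem sum_antidiagonal_neg_one_pow_mul_choose_mul_add_choose (a b n : ℕ) :
    ∑ p ∈ antidiagonal n, (-1 : ℤ) ^ p.1 * a.choose p.1 * (a + b + p.2).choose p.2 =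
      (b + n).choose n := by
  induction a generalizing b n with
  | zero =>
    rw [Nat.sum_antidiagonal_eq_sum_range_succ_mk, sum_range_succ']
    simp
  | succ a ih =>
    cases n with
    | zero => simp
    | succ n =>
      have pascal : ∀ p ∈ antidiagonal n,
          (-1 : ℤ) ^ (p.1 + 1) * (a + 1).choose (p.1 + 1) * (a + 1 + b + p.2).choose p.2 =
            (-1 : ℤ) ^ (p.1 + 1) * a.choose (p.1 + 1) * (a + (b + 1) + p.2).choose p.2 -
              (-1 : ℤ) ^ p.1 * a.choose p.1 * (a + (b + 1) + p.2).choose p.2 := by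
        intro p _
        rw [Nat.choose_succ_succ', show a + 1 + b = a + (b + 1) by ring]
        push_cast
        ring
      have h := ih (b + 1) (n + 1)
      rw [Nat.sum_antidiagonal_succ] at h ⊢
      rw [sum_congr rfl pascal, sum_sub_distrib, ih (b + 1) n,
        show a + 1 + b = a + (b + 1) by ring, show b + 1 + n = b + (n + 1) by ring]
      rw [show b + 1 + (n + 1) = b + (n + 1) + 1 by ring, Nat.choose_succ_succ'] at h
      simp only [Nat.choose_zero_right] at h ⊢
      push_cast at h
      linear_combination h

theorem sum_antidiagonal_neg_one_pow_mul_mul_choose_mul_add_choose (a b n : ℕ) :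
    ∑ p ∈ antidiagonal (n + 1),
        (-1 : ℤ) ^ p.1 * p.1 * a.choose p.1 * (a + b + p.2).choose p.2 =
      -(a * (b + 1 + n).choose n) := by
  cases a with
  | zero => simp [Nat.sum_antidiagonal_succ]
  | succ a =>
    have absorb : ∀ p ∈ antidiagonal n,
        (-1 : ℤ) ^ (p.1 + 1) * ((p.1 + 1 : ℕ) : ℤ) * (a + 1).choose (p.1 + 1) *
            (a + 1 + b + p.2).choose p.2 =
          -((a + 1 : ℕ) *
            ((-1 : ℤ) ^ p.1 * a.choose p.1 * (a + (b + 1) + p.2).choose p.2)) := by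
      intro p _
      have h : ((p.1 + 1 : ℕ) : ℤ) * (a + 1).choose (p.1 + 1) =
          (a + 1 : ℕ) * a.choose p.1 := by
        exact_mod_cast (mul_comm _ _).trans (Nat.add_one_mul_choose_eq a p.1).symm
      rw [show a + 1 + b = a + (b + 1) by ring]
      linear_combination (-1 : ℤ) ^ (p.1 + 1) * (a + (b + 1) + p.2).choose p.2 * h
    rw [Nat.sum_antidiagonal_succ, sum_congr rfl absorb, sum_neg_distrib, ← mul_sum,
      sum_antidiagonal_neg_one_pow_mul_choose_mul_add_choose]
    simp

theorem sum_antidiagonal_ballot_eq_zero (a b k n : ℕ) (hb : b + 1 = k * (n + 1)) :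
    ∑ p ∈ antidiagonal (n + 1),
      (-1 : ℤ) ^ p.1 * a.choose p.1 * (a + k * p.1) * (a + b + p.2).choose p.2 = 0 := by
  have hsplit : ∀ p ∈ antidiagonal (n + 1),
      (-1 : ℤ) ^ p.1 * a.choose p.1 * (a + k * p.1) * (a + b + p.2).choose p.2 =
        a * ((-1 : ℤ) ^ p.1 * a.choose p.1 * (a + b + p.2).choose p.2) +
          k * ((-1 : ℤ) ^ p.1 * p.1 * a.choose p.1 * (a + b + p.2).choose p.2) := by
    intro p _
    ring
  have hchoose : ((b + (n + 1)).choose (n + 1) : ℤ) = k * (b + 1 + n).choose n := by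
    have h := Nat.choose_succ_right_eq (b + (n + 1)) n
    rw [show b + (n + 1) - n = k * (n + 1) by omega] at h
    have h' : ((b + (n + 1)).choose (n + 1) : ℤ) * (n + 1) =
        k * (b + (n + 1)).choose n * (n + 1) := by
      exact_mod_cast h.trans (by ring)
    rw [show b + 1 + n = b + (n + 1) by ring]
    exact mul_right_cancel₀ (by positivity) h'
  rw [sum_congr rfl hsplit, sum_add_distrib, ← mul_sum, ← mul_sum,
    sum_antidiagonal_neg_one_pow_mul_choose_mul_add_choose,
    sum_antidiagonal_neg_one_pow_mul_mul_choose_mul_add_choose, hchoose]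
  ring

/-- The entry `(i + 1, j + 1)` of the matrix defining `D (m + 1) _ 0 (k + 1)`; the truncated
subtraction agrees with `ichoose`, which also reads a negative top argument as `0`. -/
def ballotEntry (m k i j : ℕ) : ℤ :=
  if i ≤ j + 1 then ((m + 1 - k * (j + 1)).choose (j + 1 - i) : ℤ) else 0

theorem mul_det_cornerMatrix_ballotEntry (m k : ℕ) (hk : 1 ≤ k) (N : ℕ)
    (hN : k * N ≤ m + 1) :
    ((m : ℤ) + 1) * (cornerMatrix (ballotEntry m k) N).det =
      ((m : ℤ) + 1 - k * N) * (m + N).choose N := by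
  induction N using Nat.strong_induction_on with
  | _ N ih =>
  cases N with
  | zero => simp [cornerMatrix]
  | succ N =>
    obtain ⟨c, hc⟩ : ∃ c, c + k * (N + 1) = m + 1 := ⟨m + 1 - k * (N + 1), by omega⟩
    have hpos : 0 < k * (N + 1) := Nat.mul_pos hk N.succ_pos
    obtain ⟨b, hb⟩ : ∃ b, b + 1 = k * (N + 1) := ⟨k * (N + 1) - 1, by omega⟩
    have hkey := sum_antidiagonal_ballot_eq_zero c b k N hb
    rw [Nat.sum_antidiagonal_succ, ← Nat.sum_antidiagonal_swap,
      Nat.sum_antidiagonal_eq_sum_range_succ_mk] at hkey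
    have hterm : ∀ i ∈ range (N + 1),
        ((m : ℤ) + 1) *
            ((-1) ^ (i + N) * ballotEntry m k i N * (cornerMatrix (ballotEntry m k) i).det) =
          -((-1 : ℤ) ^ (N - i + 1) * c.choose (N - i + 1) * (c + k * ((N - i + 1 : ℕ) : ℤ)) *
              (m + i).choose i) := by
      intro i hi
      obtain ⟨d, rfl⟩ := Nat.exists_eq_add_of_le (Nat.lt_succ_iff.mp (mem_range.mp hi))
      have hentry : ballotEntry m k i (i + d) = c.choose (d + 1) := by
        rw [ballotEntry, if_pos (by omega), show m + 1 - k * (i + d + 1) = c by omega,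
          show i + d + 1 - i = d + 1 by omega]
      have hsign : (-1 : ℤ) ^ (i + (i + d)) = (-1) ^ d := by
        rw [← add_assoc, pow_add, ← two_mul, pow_mul, neg_one_sq, one_pow, one_mul]
      have hcZ : (c : ℤ) + k * (i + d + 1) = m + 1 := by exact_mod_cast hc
      have hi := ih i (by omega) (le_trans (Nat.mul_le_mul_left k (by omega)) hN)
      rw [hentry, hsign, show i + d - i = d by omega]
      push_cast
      linear_combination (-1 : ℤ) ^ d * c.choose (d + 1) * hi -
        (-1 : ℤ) ^ d * c.choose (d + 1) * (m + i).choose i * hcZ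
    rw [det_cornerMatrix_succ (by simp [ballotEntry]) (fun i j h => by simp [ballotEntry]; omega),
      mul_sum, sum_congr rfl hterm, sum_neg_distrib]
    have hcZ : (c : ℤ) + k * (N + 1) = m + 1 := by exact_mod_cast hc
    simp only [Prod.swap_prod_mk, Nat.succ_eq_add_one, Nat.choose_zero_right,
      show c + b = m by omega] at hkey
    push_cast at hkey ⊢
    linear_combination -hkey + (m + (N + 1)).choose (N + 1) * hcZ

theorem ichoose_natCast (a b : ℕ) : ichoose a b = a.choose b := by
  simp [ichoose]

theorem D_eq_det_cornerMatrix_ballotEntry (m n k : ℕ) :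
    D (m + 1) (n + 1) 0 (k + 1) = (cornerMatrix (ballotEntry m k) n).det := by
  have hsize : ((n + 1 : ℤ) - 1).toNat = n := by omega
  rw [D, ← Matrix.det_submatrix_equiv_self (finCongr hsize.symm)]
  congr 1
  ext i j
  have hmax : max (0 : ℤ) ((k + 1 - 1) * ((j : ℤ) + 1)) = ((k * (j + 1) : ℕ) : ℤ) := by
    push_cast
    rw [add_sub_cancel_right]
    exact max_eq_right (by positivity)
  simp only [Matrix.submatrix_apply, Matrix.of_apply, finCongr_apply, Fin.val_cast, hmax,
    cornerMatrix, ballotEntry, ichoose]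
  split_ifs <;> first | omega | congr 2 <;> omega

theorem det_eq_generalized_ballot (m n k : ℤ) (hk : 1 ≤ k) (hn : 1 ≤ n) (hm : k * n ≤ m) :
    (D (m + 1) (n + 1) 0 (k + 1) : ℚ) =
      ((m : ℚ) + 1 - (k : ℚ) * (n : ℚ)) / ((m : ℚ) + 1) * (ichoose (m + n) n : ℚ) := by
  lift k to ℕ using by omega
  lift n to ℕ using by omega
  lift m to ℕ using by nlinarith
  have hkn : k * n ≤ m + 1 := by
    have : k * n ≤ m := by exact_mod_cast hm
    omega
  have h : ((m : ℚ) + 1) * (cornerMatrix (ballotEntry m k) n).det =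
      ((m : ℚ) + 1 - k * n) * (m + n).choose n := by
    exact_mod_cast mul_det_cornerMatrix_ballotEntry m k (by exact_mod_cast hk) n hkn
  rw [D_eq_det_cornerMatrix_ballotEntry, ← Nat.cast_add, ichoose_natCast, div_mul_eq_mul_div,
    eq_div_iff (by positivity)]
  linear_combination h
end
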